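/- Let p > q ≥ 1 be coprime integers with p/(p−q) = [b_1,…,b_k], b_1,…,b_k ≥ 2, and suppose k ≥ 4, b_i ≥ 3 for i = 2,…,k−2, and b_k ≥ k−2. Then for every integer r with 0 ≤ r ≤ k−4, the k-tuple n_r = (1, 2,…,2, 3, 2,…,2, 1, k−2−r), consisting of a first entry 1, followed by r entries equal to 2, then an entry 3, then k−4−r entries equal to 2, then an entry 1, and a final entry equal to k−2−r, belongs to Z_{p,q}. -/

import Mathlib

/-- The continued fraction `[n_1, …, n_k] = n_1 - 1/(n_2 - 1/(… - 1/n_k))`,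
computed by the backwards recursion `t_k = n_k`, `t_i = n_i - 1/t_{i+1}`. -/
def cf : List ℚ → ℚ
  | [] => 0
  | [a] => a
  | a :: b :: l => a - 1 / cf (b :: l)

/-- The continued fraction of a tuple of integers. -/
def cfI (l : List ℤ) : ℚ := cf (l.map (fun n => (n : ℚ)))

/-- A tuple is admissible if every denominator `t_i`, `i = 2, …, k`, appearing in the
backwards recursion computing the continued fraction is positive, i.e. the continued
fraction of every nonempty proper suffix is positive. -/
def Admissible (l : List ℤ) : Prop :=
  ∀ t : List ℤ, t ≠ [] → t ≠ l → t <:+ l → 0 < cfI t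

/-- Given the tuple `b = (b_1, …, b_k)` with `p/(p-q) = [b_1, …, b_k]`, the set
`Z_{p,q}` consists of the admissible `k`-tuples `(n_1, …, n_k)` of non-negative
integers with `[n_1, …, n_k] = 0` and `0 ≤ n_i ≤ b_i` for all `i`. -/
def Zset (b : List ℤ) : Set (List ℤ) :=
  {n | Admissible n ∧ cfI n = 0 ∧ List.Forall₂ (fun x y => 0 ≤ x ∧ x ≤ y) n b}

lemma cf_cons (a : ℚ) (l : List ℚ) (h : l ≠ []) : cf (a :: l) = a - 1 / cf l := by
  cases l with
  | nil => simp at h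
  | cons b t => rfl

lemma cfI_cons (a : ℤ) (l : List ℤ) (h : l ≠ []) : cfI (a :: l) = (a : ℚ) - 1 / cfI l := by
  cases l with
  | nil => exact absurd rfl h
  | cons x t => rfl

/-- Every nonempty suffix has positive continued fraction. -/
def AllPos (l : List ℤ) : Prop := ∀ t : List ℤ, t ≠ [] → t <:+ l → 0 < cfI t

lemma allPos_cons {a : ℤ} {l : List ℤ} (h1 : 0 < cfI (a :: l)) (h2 : AllPos l) :
    AllPos (a :: l) := by
  intro t ht hsuf
  rcases List.suffix_cons_iff.1 hsuf with rfl | hsuf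
  · exact h1
  · exact h2 t ht hsuf

lemma allPos_singleton {a : ℤ} (h : 0 < a) : AllPos [a] := by
  intro t ht hsuf
  rcases List.suffix_cons_iff.1 hsuf with rfl | hsuf
  · simpa [cfI, cf] using h
  · simp only [List.suffix_nil] at hsuf
    exact absurd hsuf ht

lemma two_sub_div (x y : ℚ) (hy : y ≠ 0) : 2 - x / y = (2 * y - x) / y := by
  field_simp

lemma tail_val (a : ℤ) (ha : 2 ≤ a) (j : ℕ) (h : (j : ℤ) ≤ a - 2) :
    cfI (List.replicate j 2 ++ [1, a]) = ((a : ℚ) - 1 - j) / ((a : ℚ) - j) := by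
  induction j with
  | zero =>
      have ha0 : (0 : ℚ) < (a : ℚ) := by exact_mod_cast (by omega : (0:ℤ) < a)
      simp only [List.replicate_zero, List.nil_append, Nat.cast_zero, sub_zero]
      rw [cfI_cons 1 [a] (by simp)]
      rw [show cfI [a] = (a:ℚ) from rfl]
      push_cast
      field_simp
  | succ j ih =>
      have hj : (j : ℤ) ≤ a - 2 := by push_cast at h ⊢; omega
      have hnum : (0 : ℚ) < (a : ℚ) - 1 - j := by
        have h' : (0:ℤ) < a - 1 - j := by omega
        exact_mod_cast h'
      have hden : (0 : ℚ) < (a : ℚ) - j := by linarith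
      rw [List.replicate_succ, List.cons_append,
        cfI_cons 2 _ (by simp), ih hj]
      have hd2 : (a:ℚ) - ((j:ℚ) + 1) ≠ 0 := by
        intro hc; apply hnum.ne'; linarith
      push_cast
      rw [one_div_div, two_sub_div _ _ hnum.ne', div_eq_div_iff hnum.ne' hd2]
      ring

lemma tail_pos (a : ℤ) (ha : 2 ≤ a) (j : ℕ) (h : (j : ℤ) ≤ a - 2) :
    AllPos (List.replicate j 2 ++ [1, a]) := by
  induction j with
  | zero =>
      simp only [List.replicate_zero, List.nil_append]
      refine allPos_cons ?_ (allPos_singleton (by omega))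
      rw [show ((1:ℤ) :: [a]) = List.replicate 0 2 ++ [1, a] by simp,
        tail_val a ha 0 (by push_cast; omega)]
      have hnum : (0 : ℚ) < (a : ℚ) - 1 - ((0:ℕ):ℚ) := by
        have h' : (0:ℤ) < a - 1 - ((0:ℕ):ℤ) := by omega
        exact_mod_cast h'
      have hden : (0 : ℚ) < (a : ℚ) - ((0:ℕ):ℚ) := by
        have h' : (0:ℤ) < a - ((0:ℕ):ℤ) := by omega
        exact_mod_cast h'
      exact div_pos hnum hden
  | succ j ih =>
      have hj : (j : ℤ) ≤ a - 2 := by push_cast at h ⊢; omega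
      rw [List.replicate_succ, List.cons_append]
      refine allPos_cons ?_ (ih hj)
      rw [show ((2:ℤ) :: (List.replicate j 2 ++ [1, a]))
          = List.replicate (j+1) 2 ++ [1, a] by simp [List.replicate_succ],
        tail_val a ha (j+1) h]
      have hnum : (0 : ℚ) < (a : ℚ) - 1 - ((j:ℚ)+1) := by
        have h' : (0:ℤ) < a - 1 - ((j:ℤ) + 1) := by omega
        exact_mod_cast h'
      have hden : (0 : ℚ) < (a : ℚ) - ((j:ℚ)+1) := by linarith
      have : ((j+1 : ℕ) : ℚ) = (j:ℚ) + 1 := by push_cast; ring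
      rw [this]
      exact div_pos hnum hden

lemma ones_lemma (l : List ℤ) (hl : l ≠ []) (h1 : cfI l = 1) (hp : AllPos l) (j : ℕ) :
    cfI (List.replicate j 2 ++ l) = 1 ∧ AllPos (List.replicate j 2 ++ l) := by
  induction j with
  | zero => simpa using ⟨h1, hp⟩
  | succ j ih =>
      have hne : List.replicate j 2 ++ l ≠ [] := by
        simp [hl]
      rw [List.replicate_succ, List.cons_append]
      constructor
      · rw [cfI_cons 2 _ hne, ih.1]; norm_num
      · refine allPos_cons ?_ ih.2
        rw [cfI_cons 2 _ hne, ih.1]; norm_num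

/-- Let `p > q ≥ 1` be coprime with `p/(p-q) = [b_1, …, b_k]`, all `b_i ≥ 2`, `k ≥ 4`,
`b_i ≥ 3` for `i = 2, …, k-2` (one-based indexing) and `b_k ≥ k - 2`.  Then for every
`0 ≤ r ≤ k - 4` the tuple
`n_r = (1, 2, …, 2 (r times), 3, 2, …, 2 (k-4-r times), 1, k-2-r)` belongs to
`Z_{p,q}`. -/
theorem stmt9 (p q : ℤ) (hq : 1 ≤ q) (hqp : q < p) (hcop : IsCoprime p q)
    (b : List ℤ) (hb : ∀ x ∈ b, 2 ≤ x) (hbcf : cfI b = (p : ℚ) / ((p : ℚ) - (q : ℚ)))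
    (hk : 4 ≤ b.length)
    (hmid : ∀ i : Fin b.length, 1 ≤ (i : ℕ) → (i : ℕ) + 3 ≤ b.length → 3 ≤ b.get i)
    (hlast : ∀ h : b ≠ [], ((b.length : ℤ) - 2) ≤ b.getLast h)
    (r : ℕ) (hr : r ≤ b.length - 4) :
    (1 :: (List.replicate r 2 ++ 3 :: (List.replicate (b.length - 4 - r) 2 ++
        [1, (b.length : ℤ) - 2 - (r : ℤ)]))) ∈ Zset b := by
  set k := b.length with hkdef
  set m := k - 4 - r with hmdef
  set a : ℤ := (k : ℤ) - 2 - (r : ℤ) with hadef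
  have hrk : r + m + 4 = k := by omega
  have hma : (m : ℤ) = a - 2 := by simp only [hadef]; omega
  have ha2 : 2 ≤ a := by simp only [hadef]; omega
  -- the inner tail
  set T : List ℤ := List.replicate m 2 ++ [1, a] with hTdef
  have hTne : T ≠ [] := by simp [hTdef]
  have hTval : cfI T = 1 / 2 := by
    rw [hTdef, tail_val a ha2 m (by omega)]
    have : ((m : ℤ) : ℚ) = (a : ℚ) - 2 := by exact_mod_cast congrArg (Int.cast : ℤ → ℚ) hma
    push_cast at this
    rw [this]
    ring_nf
  have hTpos : AllPos T := tail_pos a ha2 m (by omega)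
  -- the list starting with 3
  set L : List ℤ := 3 :: T with hLdef
  have hLval : cfI L = 1 := by
    rw [hLdef, cfI_cons 3 T hTne, hTval]; norm_num
  have hLpos : AllPos L := by
    refine allPos_cons ?_ hTpos
    rw [hLval]; norm_num
  -- the rest after the leading 1
  have hones := ones_lemma L (by simp [hLdef]) hLval hLpos r
  set rest : List ℤ := List.replicate r 2 ++ L with hrestdef
  have hrestne : rest ≠ [] := by simp [hrestdef, hLdef]
  have hrestval : cfI rest = 1 := hones.1
  have hrestpos : AllPos rest := hones.2
  refine ⟨?_, ?_, ?_⟩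
  · -- Admissible
    intro t ht htne hsuf
    rcases List.suffix_cons_iff.1 hsuf with rfl | hsuf
    · exact absurd rfl htne
    · exact hrestpos t ht hsuf
  · -- cf = 0
    show cfI (1 :: rest) = 0
    rw [cfI_cons 1 rest hrestne, hrestval]
    norm_num
  · -- bounds
    apply List.forall₂_of_length_eq_of_get
    · show (1 :: rest).length = k
      simp [hrestdef, hLdef, hTdef]
      omega
    intro i h₁ h₂
    simp only [List.get_eq_getElem]
    have hbge : ∀ (i : ℕ) (h : i < b.length), 2 ≤ b[i] := by
      intro i h
      exact hb _ (List.getElem_mem h)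
    have hmid' : ∀ (i : ℕ) (h : i < b.length), 1 ≤ i → i + 3 ≤ k → 3 ≤ b[i] := by
      intro i h h1 h3
      simpa using hmid ⟨i, h⟩ h1 h3
    have ha0 : 0 ≤ a := by rw [hadef]; omega
    have hlast' : ∀ (i : ℕ) (h : i < b.length), i + 1 = k → a ≤ b[i] := by
      intro i h hi
      have hbne : b ≠ [] := List.ne_nil_of_length_pos (by omega)
      have hl := hlast hbne
      rw [List.getLast_eq_getElem hbne] at hl
      have heq : b[b.length - 1]'(by omega) = b[i]'h := by congr 1; omega
      rw [heq] at hl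
      refine le_trans ?_ hl
      rw [hadef]; omega
    match i with
    | 0 =>
      refine ⟨by norm_num, ?_⟩
      simpa using le_trans (by norm_num) (hbge 0 h₂)
    | Nat.succ j =>
      rw [List.getElem_cons_succ]
      have hj : j < rest.length := by
        simpa using Nat.lt_of_succ_lt_succ h₁
      have hjlen : j < r + (m + 3) := by
        simpa [hrestdef, hLdef, hTdef] using hj
      by_cases hjr : j < r
      · have hval : rest[j]'hj = (2:ℤ) := by
          simp only [hrestdef]
          rw [List.getElem_append_left (by simpa using hjr)]
          exact List.getElem_replicate _
        rw [hval]
        exact ⟨by norm_num, hbge _ h₂⟩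
      · obtain ⟨s, rfl⟩ : ∃ s, j = r + s := ⟨j - r, by omega⟩
        have hrs : rest[r + s]'hj = L[s]'(by simp [hLdef, hTdef]; omega) := by
          simp only [hrestdef]
          rw [List.getElem_append_right (by simp)]
          simp
        rw [hrs]
        cases s with
        | zero =>
          simp only [hLdef, List.getElem_cons_zero]
          exact ⟨by norm_num, hmid' _ h₂ (by omega) (by omega)⟩
        | succ t =>
          have ht2 : t < m + 2 := by omega
          simp only [hLdef, List.getElem_cons_succ]
          by_cases htm : t < m
          · have hval : T[t]'(by simp [hTdef]; omega) = (2:ℤ) := by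
              simp only [hTdef]
              rw [List.getElem_append_left (by simpa using htm)]
              exact List.getElem_replicate _
            rw [hval]
            exact ⟨by norm_num, hbge _ h₂⟩
          · obtain ⟨u, rfl⟩ : ∃ u, t = m + u := ⟨t - m, by omega⟩
            have hu2 : u < 2 := by omega
            have hTu : T[m + u]'(by simp [hTdef]; omega)
                = [(1:ℤ), a][u]'(by simp only [List.length_cons, List.length_nil]; omega) := by
              simp only [hTdef]
              rw [List.getElem_append_right (by simp)]
              simp
            rw [hTu]
            interval_cases u
            · simp only [List.getElem_cons_zero]
              exact ⟨by norm_num, le_trans (by norm_num) (hbge _ h₂)⟩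
            · simp only [List.getElem_cons_succ, List.getElem_cons_zero]
              exact ⟨ha0, hlast' _ h₂ (by omega)⟩
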